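/- arXiv:2104.10750 — 7 statements merged into one kernel-verified Lean document; each statement's English description precedes it below -/
import Mathlib

section
/- Let a > 0. The function pen_a(x) = -log(log(1 + a/x²)) is strictly concave on the interval (0, ∞), i.e., its second derivative is strictly negative for all x > 0. -/
/-!
With `L = log (1 + a / x ^ 2)`, the penalty has derivative `2a / (x (a + x²) L)`, so its second
derivative has the sign of `-((a + 3x²) L - 2a)`. Substituting `a = t x²`, positivity of the bracket
reduces to `log (1 + t) > 2t / (2 + t)`, which is the first term of the series
`log (1 + t) = 2 ∑ y^(2k+1) / (2k+1)` with `y = t / (2 + t)`.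
-/

open Real Set

noncomputable def horseshoePenalty (a x : ℝ) : ℝ := -log (log (1 + a / x ^ 2))

theorem two_mul_div_two_add_lt_log_one_add {t : ℝ} (ht : 0 < t) :
    2 * t / (2 + t) < log (1 + t) := by
  have hseries := hasSum_log_one_add_inv (inv_pos.2 ht)
  have hy : 1 / (2 * t⁻¹ + 1) = t / (2 + t) := by field_simp
  rw [inv_inv, hy] at hseries
  refine hasSum_lt (f := fun k : ℕ => if k = 0 then 2 * t / (2 + t) else 0) (i := 1)
    (fun k => ?_) ?_ (by simpa using hasSum_ite_eq 0 (2 * t / (2 + t))) hseries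
  · rcases eq_or_ne k 0 with rfl | hk
    · simp [mul_div_assoc]
    · simp only [hk, if_false]; positivity
  · simp only [one_ne_zero, ↓reduceIte, Nat.cast_one, mul_one, one_div, Nat.reduceAdd]
    positivity

section
variable {a x : ℝ}

theorem log_one_add_div_sq_pos (ha : 0 < a) (hx : x ≠ 0) : 0 < log (1 + a / x ^ 2) :=
  log_pos (lt_add_of_pos_right 1 (by positivity))

theorem add_three_mul_sq_mul_log_sub_pos (ha : 0 < a) (hx : x ≠ 0) :
    0 < (a + 3 * x ^ 2) * log (1 + a / x ^ 2) - 2 * a := by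
  have hx2 : 0 < x ^ 2 := by positivity
  obtain ⟨t, ht, rfl⟩ : ∃ t, 0 < t ∧ a = t * x ^ 2 := ⟨a / x ^ 2, by positivity, by field_simp⟩
  have hlog := two_mul_div_two_add_lt_log_one_add ht
  rw [mul_div_cancel_right₀ t hx2.ne', sub_pos]
  calc 2 * (t * x ^ 2) < (t * x ^ 2 + 3 * x ^ 2) * (2 * t / (2 + t)) := by
        rw [← mul_div_assoc, lt_div_iff₀ (by positivity)]
        nlinarith [mul_pos ht hx2]
    _ < (t * x ^ 2 + 3 * x ^ 2) * log (1 + t) := by gcongr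

theorem hasDerivAt_log_one_add_div_sq (ha : 0 ≤ a) (hx : x ≠ 0) :
    HasDerivAt (fun x => log (1 + a / x ^ 2)) (-2 * a / (x * (a + x ^ 2))) x := by
  have hx2 : 0 < x ^ 2 := by positivity
  have hg : HasDerivAt (fun y => 1 + a / y ^ 2) (-2 * a / x ^ 3) x :=
    (((hasDerivAt_const x a).div (hasDerivAt_pow 2 x) hx2.ne').const_add 1).congr_deriv
      (by field_simp; ring)
  refine (hg.log (by positivity)).congr_deriv ?_
  field_simp
  ring

theorem hasDerivAt_horseshoePenalty (ha : 0 < a) (hx : x ≠ 0) :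
    HasDerivAt (horseshoePenalty a)
      (2 * a / (x * (a + x ^ 2) * log (1 + a / x ^ 2))) x := by
  refine (((hasDerivAt_log_one_add_div_sq ha.le hx).log (log_one_add_div_sq_pos ha hx).ne').neg).congr_deriv ?_
  have : a + x ^ 2 ≠ 0 := by positivity
  field_simp

theorem hasDerivAt_deriv_horseshoePenalty (ha : 0 < a) (hx : x ≠ 0) :
    HasDerivAt (deriv (horseshoePenalty a))
      (-2 * a * ((a + 3 * x ^ 2) * log (1 + a / x ^ 2) - 2 * a) /
        (x ^ 2 * (a + x ^ 2) ^ 2 * log (1 + a / x ^ 2) ^ 2)) x := by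
  have hderiv : deriv (horseshoePenalty a) =ᶠ[nhds x]
      fun y => 2 * a / (y * (a + y ^ 2) * log (1 + a / y ^ 2)) := by
    filter_upwards [isOpen_ne.mem_nhds hx] with y hy
    exact (hasDerivAt_horseshoePenalty ha hy).deriv
  refine HasDerivAt.congr_of_eventuallyEq ?_ hderiv
  have hlog := log_one_add_div_sq_pos ha hx
  have hpoly : HasDerivAt (fun y => y * (a + y ^ 2)) (a + 3 * x ^ 2) x :=
    ((hasDerivAt_id x).mul ((hasDerivAt_const x a).add (hasDerivAt_pow 2 x))).congr_deriv
      (by simp only [Pi.add_apply, id_eq, Nat.cast_ofNat, Nat.add_one_sub_one, pow_one]; ring)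
  have : a + x ^ 2 ≠ 0 := by positivity
  have hden : HasDerivAt (fun y => y * (a + y ^ 2) * log (1 + a / y ^ 2))
      ((a + 3 * x ^ 2) * log (1 + a / x ^ 2) - 2 * a) x :=
    (hpoly.mul (hasDerivAt_log_one_add_div_sq ha.le hx)).congr_deriv (by field_simp; ring)
  refine ((hasDerivAt_const x (2 * a)).div hden (by positivity)).congr_deriv ?_
  field_simp
  ring

theorem deriv_deriv_horseshoePenalty_neg (ha : 0 < a) (hx : x ≠ 0) :
    deriv (deriv (horseshoePenalty a)) x < 0 := by
  rw [(hasDerivAt_deriv_horseshoePenalty ha hx).deriv]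
  have hlog := log_one_add_div_sq_pos ha hx
  exact div_neg_of_neg_of_pos
    (mul_neg_of_neg_of_pos (by linarith) (add_three_mul_sq_mul_log_sub_pos ha hx))
    (by positivity)

theorem strictConcaveOn_horseshoePenalty (ha : 0 < a) :
    StrictConcaveOn ℝ (Ioi 0) (horseshoePenalty a) :=
  strictConcaveOn_of_deriv2_neg' (convex_Ioi 0)
    (fun x hx => (hasDerivAt_horseshoePenalty ha hx.ne').continuousAt.continuousWithinAt)
    (fun x hx => by
      simpa only [Function.iterate_succ, Function.iterate_zero, Function.comp_apply,
        Function.id_comp] using deriv_deriv_horseshoePenalty_neg ha hx.ne')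

end

theorem stmt_2 (a : ℝ) (ha : 0 < a) :
    StrictConcaveOn ℝ (Set.Ioi (0 : ℝ))
      (fun x : ℝ => -Real.log (Real.log (1 + a / x ^ 2))) ∧
    ∀ x : ℝ, 0 < x →
      deriv (deriv (fun x : ℝ => -Real.log (Real.log (1 + a / x ^ 2)))) x < 0 :=
  ⟨strictConcaveOn_horseshoePenalty ha, fun _ hx => deriv_deriv_horseshoePenalty_neg ha hx.ne'⟩
end

section
/- For a > 0 and all x > 0, (a + 3x²)·log(1 + a/x²) - 2a > 0. -/
/-! With `t = a / x²` the claim reads `log (1 + t) > 2t / (t + 3)`, which is weaker than the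
classical Padé bound `log (1 + t) > 2t / (t + 2)`. -/

open Real

lemma two_mul_div_add_three_lt_log_one_add {t : ℝ} (ht : 0 < t) :
    2 * t / (t + 3) < log (1 + t) :=
  calc 2 * t / (t + 3) < 2 * t / (t + 2) := by gcongr; linarith
    _ < log (1 + t) := lt_log_one_add_of_pos ht

theorem stmt_3 (a : ℝ) (ha : 0 < a) (x : ℝ) (hx : 0 < x) :
    (a + 3 * x ^ 2) * Real.log (1 + a / x ^ 2) - 2 * a > 0 := by
  have hx2 : 0 < x ^ 2 := by positivity
  have hbound := two_mul_div_add_three_lt_log_one_add (div_pos ha hx2)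
  have hscale : 2 * (a / x ^ 2) / (a / x ^ 2 + 3) * (a + 3 * x ^ 2) = 2 * a := by
    field_simp
  have := mul_lt_mul_of_pos_right hbound (by positivity : 0 < a + 3 * x ^ 2)
  linarith
end

section
/- For any a > 0 and ω ≠ 0, the first derivative of the horseshoe-like penalty pen_a(ω) = -log(log(1 + a/ω²)) satisfies |pen_a'(ω)| < 2/|ω|. -/
/-!
Writing `t = a / ω²`, the chain rule gives `pen_a'(ω) = (2 / ω) · t / ((1 + t) log (1 + t))`, and
the second factor lies in `(0, 1)` because `x - 1 < x log x` for every `x > 0`, `x ≠ 1`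
(apply `log y < y - 1` to `y = x⁻¹`).
-/

open Real

lemma Real.sub_one_lt_mul_log {x : ℝ} (hx : 0 < x) (hx1 : x ≠ 1) : x - 1 < x * log x := by
  have h := log_lt_sub_one_of_pos (inv_pos.2 hx) (inv_ne_one.2 hx1)
  rw [log_inv] at h
  calc x - 1 = x * (1 - x⁻¹) := by field_simp
    _ < x * log x := by gcongr; linarith

lemma hasDerivAt_neg_log_log_one_add_div_sq (a : ℝ) {ω : ℝ} (hω : ω ≠ 0)
    (h₁ : 1 + a / ω ^ 2 ≠ 0) (h₂ : log (1 + a / ω ^ 2) ≠ 0) :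
    HasDerivAt (fun x : ℝ => -log (log (1 + a / x ^ 2)))
      (2 / ω * (a / ω ^ 2 / ((1 + a / ω ^ 2) * log (1 + a / ω ^ 2)))) ω := by
  have hsq : HasDerivAt (fun x : ℝ => 1 + a / x ^ 2) (-(2 * a) / ω ^ 3) ω := by
    refine (((hasDerivAt_const ω a).div (hasDerivAt_pow 2 ω) (pow_ne_zero 2 hω)).const_add 1
      ).congr_deriv ?_
    field_simp
    ring
  refine ((hsq.log h₁).log h₂).neg.congr_deriv ?_
  field_simp

theorem stmt_4 (a : ℝ) (ha : 0 < a) (ω : ℝ) (hω : ω ≠ 0) :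
    |deriv (fun x : ℝ => -Real.log (Real.log (1 + a / x ^ 2))) ω| < 2 / |ω| := by
  set t := a / ω ^ 2
  have ht : 0 < t := by positivity
  have hlog : 0 < log (1 + t) := log_pos (by linarith)
  have hratio : t / ((1 + t) * log (1 + t)) < 1 := by
    rw [div_lt_one (by positivity)]
    simpa using sub_one_lt_mul_log (x := 1 + t) (by linarith) (by linarith)
  rw [(hasDerivAt_neg_log_log_one_add_div_sq a hω (by linarith) hlog.ne').deriv, abs_mul,
    abs_div, abs_two, abs_of_pos (by positivity : 0 < t / ((1 + t) * log (1 + t)))]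
  exact mul_lt_of_lt_one_right (by positivity) hratio
end

section
/- The function π(θ | a) = (1/(2π√a))·log(1 + a/θ²), for a > 0, is a probability density on ℝ, i.e., it is nonnegative and integrates to 1 over the real line. -/
/-!
On `(0, ∞)` the function `x ↦ log (1 + a / x ^ 2)` has the primitive
`F x = x * log (1 + a / x ^ 2) + 2 √a * arctan (x / √a)`, which extends continuously by `F 0 = 0`
(because `x log x → 0`) and tends to `π √a` at `+∞` (because `x log (1 + a / x ^ 2) ~ a / x`).
So the integral over the half-line is `π √a`, and by evenness the integral over `ℝ` is `2 π √a`.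
-/

open MeasureTheory Set Filter Real Topology

namespace Real

/-- At `x = 0` both sides vanish (`log 0 = 0`), so the identity holds on all of `ℝ`. -/
lemma mul_log_one_add_div_sq {a : ℝ} (ha : 0 ≤ a) (x : ℝ) :
    x * log (1 + a / x ^ 2) = x * log (x ^ 2 + a) - 2 * (x * log x) := by
  rcases eq_or_ne x 0 with rfl | hx
  · simp
  have hx2 : 0 < x ^ 2 := by positivity
  rw [one_add_div hx2.ne', log_div (by positivity) hx2.ne', log_pow]
  push_cast
  ring

lemma log_one_add_div_sq_nonneg {a : ℝ} (ha : 0 ≤ a) (x : ℝ) : 0 ≤ log (1 + a / x ^ 2) :=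
  log_nonneg (le_add_of_nonneg_right (by positivity))

lemma continuous_mul_log_one_add_div_sq {a : ℝ} (ha : 0 < a) :
    Continuous fun x : ℝ ↦ x * log (1 + a / x ^ 2) := by
  simp_rw [mul_log_one_add_div_sq ha.le]
  have hlog : Continuous fun x : ℝ ↦ log (x ^ 2 + a) :=
    (continuous_pow 2 |>.add continuous_const).log fun x ↦ (by positivity : 0 < x ^ 2 + a).ne'
  exact (continuous_id.mul hlog).sub (continuous_mul_log.const_mul 2)

lemma tendsto_mul_log_one_add_div_sq_atTop (a : ℝ) :
    Tendsto (fun x : ℝ ↦ x * log (1 + a / x ^ 2)) atTop (𝓝 0) := by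
  refine tendsto_mul_log_one_add_of_tendsto ?_
  refine (tendsto_const_nhds (x := a) |>.div_atTop tendsto_id).congr' ?_
  filter_upwards [eventually_ne_atTop 0] with x hx
  simp only [id]
  field_simp

lemma hasDerivAt_mul_log_one_add_div_sq_add_arctan {a x : ℝ} (ha : 0 < a) (hx : x ≠ 0) :
    HasDerivAt (fun x ↦ x * log (1 + a / x ^ 2) + 2 * √a * arctan (x / √a))
      (log (1 + a / x ^ 2)) x := by
  have hx2 : x ^ 2 ≠ 0 := pow_ne_zero 2 hx
  have hdiv : HasDerivAt (fun x : ℝ ↦ a / x ^ 2) (a * (-(2 * x) / (x ^ 2) ^ 2)) x := by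
    simpa [div_eq_mul_inv] using ((hasDerivAt_pow 2 x).inv hx2).const_mul a
  have hinner := hdiv.const_add 1
  have hlog := (hasDerivAt_id' x).mul (hinner.log (by positivity))
  have harctan := ((hasDerivAt_arctan (x / √a)).comp x
    ((hasDerivAt_id' x).div_const √a)).const_mul (2 * √a)
  refine (hlog.add harctan).congr_deriv ?_
  have hsq : √a ^ 2 = a := sq_sqrt ha.le
  field_simp
  rw [hsq]
  ring

lemma integral_Ioi_log_one_add_div_sq {a : ℝ} (ha : 0 < a) :
    ∫ x in Ioi (0 : ℝ), log (1 + a / x ^ 2) = π * √a := by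
  have hcont : Continuous fun x : ℝ ↦ x * log (1 + a / x ^ 2) + 2 * √a * arctan (x / √a) :=
    (continuous_mul_log_one_add_div_sq ha).add
      (continuous_const.mul (continuous_arctan.comp (continuous_id.div_const _)))
  have hlim : Tendsto (fun x : ℝ ↦ x * log (1 + a / x ^ 2) + 2 * √a * arctan (x / √a))
      atTop (𝓝 (0 + 2 * √a * (π / 2))) :=
    (tendsto_mul_log_one_add_div_sq_atTop a).add <| tendsto_const_nhds.mul <|
      (tendsto_arctan_atTop.mono_right nhdsWithin_le_nhds).comp
        (tendsto_id.atTop_div_const (sqrt_pos.mpr ha))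
  rw [integral_Ioi_of_hasDerivAt_of_nonneg hcont.continuousWithinAt
    (fun x hx ↦ hasDerivAt_mul_log_one_add_div_sq_add_arctan ha (ne_of_gt hx))
    (fun x _ ↦ log_one_add_div_sq_nonneg ha.le x) hlim]
  simp only [zero_mul, zero_div, arctan_zero, mul_zero, add_zero, sub_zero]
  ring

lemma integral_log_one_add_div_sq {a : ℝ} (ha : 0 < a) :
    ∫ x, log (1 + a / x ^ 2) = 2 * π * √a := by
  have := integral_comp_abs (f := fun x ↦ log (1 + a / x ^ 2))
  simp only [sq_abs] at this
  rw [this, integral_Ioi_log_one_add_div_sq ha, mul_assoc]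

end Real

theorem stmt_6 (a : ℝ) (ha : 0 < a) :
    (∀ θ : ℝ, 0 ≤ (1 / (2 * Real.pi * Real.sqrt a)) * Real.log (1 + a / θ ^ 2)) ∧
    ∫ θ : ℝ, (1 / (2 * Real.pi * Real.sqrt a)) * Real.log (1 + a / θ ^ 2) = 1 := by
  have hnorm : 0 < 2 * π * √a := by positivity
  refine ⟨fun θ ↦ mul_nonneg (by positivity) (Real.log_one_add_div_sq_nonneg ha.le θ), ?_⟩
  rw [integral_const_mul, Real.integral_log_one_add_div_sq ha]
  field_simp
end

section
/- For a > 0 and ω ≠ 0, the conditional expectation of the latent scale ν given ω under the Gaussian scale mixture representation of the horseshoe-like prior equals E[ν | ω, a] = a²/((ω² + a)·ω²·log(1 + a/ω²)). -/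
/-!
With `b = ω² / a`, the product of the `N(0, a / (2ν))` density and the mixing density is
`(2π√a)⁻¹ ν⁻¹ (e^{-bν} - e^{-(b+1)ν})`. Multiplying by `ν` cancels the `ν⁻¹`, so the numerator
integral is elementary, `b⁻¹ - (b+1)⁻¹`, while the normalising integral is a Frullani integral,
`log ((b+1) / b) = log (1 + a / ω²)`.
-/

open MeasureTheory Real Set

section ExpDifference

variable {b c : ℝ}

lemma integral_exp_neg_mul_Ioi (hb : 0 < b) : ∫ x in Ioi (0 : ℝ), exp (-(b * x)) = b⁻¹ := by
  simpa [neg_mul, div_neg, div_eq_inv_mul] using integral_exp_mul_Ioi (neg_lt_zero.2 hb) 0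

lemma integrableOn_exp_neg_mul_Ioi (hb : 0 < b) :
    IntegrableOn (fun x => exp (-(b * x))) (Ioi 0) := by
  simpa only [neg_mul] using exp_neg_integrableOn_Ioi 0 hb

lemma exp_neg_mul_sub_exp_neg_mul_le (x : ℝ) :
    exp (-(b * x)) - exp (-(c * x)) ≤ (c - b) * x * exp (-(b * x)) := by
  have h := add_one_le_exp (-((c - b) * x))
  have hsplit : exp (-(c * x)) = exp (-(b * x)) * exp (-((c - b) * x)) := by
    rw [← exp_add]; ring_nf
  nlinarith [exp_pos (-(b * x))]

lemma integrableOn_inv_mul_exp_neg_mul_sub (hb : 0 < b) (hc : 0 < c) :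
    IntegrableOn (fun x => x⁻¹ * (exp (-(b * x)) - exp (-(c * x)))) (Ioi 0) := by
  wlog hbc : b ≤ c generalizing b c
  · convert (this hc hb (le_of_not_ge hbc)).neg using 1
    ext x
    simp only [Pi.neg_apply]
    ring
  have hmeas : Measurable fun x : ℝ => x⁻¹ * (exp (-(b * x)) - exp (-(c * x))) := by fun_prop
  refine ((integrableOn_exp_neg_mul_Ioi hb).const_mul (c - b)).mono' hmeas.aestronglyMeasurable
    (ae_restrict_of_forall_mem measurableSet_Ioi fun x (hx : 0 < x) => ?_)
  have hdiff : 0 ≤ exp (-(b * x)) - exp (-(c * x)) :=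
    sub_nonneg.2 (exp_le_exp.2 (by nlinarith))
  rw [norm_of_nonneg (mul_nonneg (inv_nonneg.2 hx.le) hdiff), inv_mul_le_iff₀ hx]
  linarith [exp_neg_mul_sub_exp_neg_mul_le (b := b) (c := c) x]

lemma integral_inv_mul_exp_neg_mul_sub (hb : 0 < b) (hc : 0 < c) :
    ∫ x in Ioi (0 : ℝ), x⁻¹ * (exp (-(b * x)) - exp (-(c * x))) = log (c / b) := by
  have hf : Continuous fun x : ℝ => exp (-x) := by fun_prop
  have h := Frullani.integral_Ioi_eq (L := 1) (R := 0)
    (hf.locallyIntegrable.locallyIntegrableOn _) hb hc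
    (by simpa using (hf.tendsto 0).mono_left nhdsWithin_le_nhds)
    tendsto_exp_neg_atTop_nhds_zero (integrableOn_inv_mul_exp_neg_mul_sub hb hc)
  simpa using h

lemma integral_exp_neg_mul_sub (hb : 0 < b) (hc : 0 < c) :
    ∫ x in Ioi (0 : ℝ), (exp (-(b * x)) - exp (-(c * x))) = b⁻¹ - c⁻¹ := by
  rw [integral_sub (integrableOn_exp_neg_mul_Ioi hb) (integrableOn_exp_neg_mul_Ioi hc),
    integral_exp_neg_mul_Ioi hb, integral_exp_neg_mul_Ioi hc]

end ExpDifference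

lemma gaussian_mul_mixingDensity_eq {a ω ν : ℝ} (ha : 0 < a) (hν : 0 < ν) :
    √(ν / (π * a)) * exp (-ν * ω ^ 2 / a) *
        ((1 - exp (-ν)) / (2 * √π * ν ^ ((3 : ℝ) / 2)))
      = (2 * π * √a)⁻¹ * (ν⁻¹ * (exp (-(ω ^ 2 / a * ν)) - exp (-((ω ^ 2 / a + 1) * ν)))) := by
  have hrpow : ν ^ ((3 : ℝ) / 2) = ν * √ν := by
    rw [show (3 : ℝ) / 2 = 1 + 1 / 2 by norm_num, rpow_add hν, rpow_one, ← sqrt_eq_rpow]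
  have hexp : exp (-ν * ω ^ 2 / a) * (1 - exp (-ν))
      = exp (-(ω ^ 2 / a * ν)) - exp (-((ω ^ 2 / a + 1) * ν)) := by
    rw [mul_sub, mul_one, ← exp_add]
    ring_nf
  rw [← hexp, hrpow, sqrt_div hν.le, sqrt_mul pi_pos.le]
  field_simp
  rw [sq_sqrt pi_pos.le, mul_comm]

theorem stmt_7 (a ω : ℝ) (ha : 0 < a) (hω : ω ≠ 0) :
    (∫ ν in Set.Ioi (0 : ℝ),
        ν * (Real.sqrt (ν / (Real.pi * a)) * Real.exp (-ν * ω ^ 2 / a) *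
          ((1 - Real.exp (-ν)) / (2 * Real.sqrt Real.pi * ν ^ ((3 : ℝ) / 2))))) /
    (∫ ν in Set.Ioi (0 : ℝ),
        Real.sqrt (ν / (Real.pi * a)) * Real.exp (-ν * ω ^ 2 / a) *
          ((1 - Real.exp (-ν)) / (2 * Real.sqrt Real.pi * ν ^ ((3 : ℝ) / 2))))
    = a ^ 2 / ((ω ^ 2 + a) * ω ^ 2 * Real.log (1 + a / ω ^ 2)) := by
  have hb : 0 < ω ^ 2 / a := by positivity
  have hc : 0 < ω ^ 2 / a + 1 := by positivity
  have hnum : ∫ ν in Ioi (0 : ℝ), ν * (√(ν / (π * a)) * exp (-ν * ω ^ 2 / a) *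
        ((1 - exp (-ν)) / (2 * √π * ν ^ ((3 : ℝ) / 2))))
      = (2 * π * √a)⁻¹ * ((ω ^ 2 / a)⁻¹ - (ω ^ 2 / a + 1)⁻¹) := by
    rw [setIntegral_congr_fun measurableSet_Ioi fun ν (hν : 0 < ν) => by
      rw [gaussian_mul_mixingDensity_eq ha hν, mul_left_comm, mul_inv_cancel_left₀ hν.ne'],
      integral_const_mul, integral_exp_neg_mul_sub hb hc]
  have hden : ∫ ν in Ioi (0 : ℝ), √(ν / (π * a)) * exp (-ν * ω ^ 2 / a) *
        ((1 - exp (-ν)) / (2 * √π * ν ^ ((3 : ℝ) / 2)))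
      = (2 * π * √a)⁻¹ * log ((ω ^ 2 / a + 1) / (ω ^ 2 / a)) := by
    rw [setIntegral_congr_fun measurableSet_Ioi fun ν hν => gaussian_mul_mixingDensity_eq ha hν,
      integral_const_mul, integral_inv_mul_exp_neg_mul_sub hb hc]
  have hratio : (ω ^ 2 / a + 1) / (ω ^ 2 / a) = 1 + a / ω ^ 2 := by
    field_simp
  rw [hnum, hden, mul_div_mul_left _ _ (by positivity), hratio]
  field_simp
  ring
end

section
/- Mixing a mean-zero Gaussian N(0, a/(2ν)) over the latent scale density π(ν) = (1 - e^{-ν})/(2√π·ν^{3/2}) on (0,∞) yields the horseshoe-like marginal density: ∫_0^∞ √(ν/(πa))·exp(-ν ω²/a)·(1 - e^{-ν})/(2√π·ν^{3/2}) dν = (1/(2π√a))·log(1 + a/ω²), for all ω ≠ 0 and a > 0. -/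
/-!
With `b = ω² / a`, the factor `ν^{1/2}` of the Gaussian normalisation cancels against `ν^{3/2}`
and the integrand becomes `(2π√a)⁻¹ · ν⁻¹ (e^{-bν} - e^{-(b+1)ν})`. This is a Frullani
integral for `x ↦ e^{-x}`, equal to `log ((b + 1) / b) = log (1 + a / ω²)`.
-/

open MeasureTheory Set Real

lemma inv_mul_exp_neg_sub_exp_neg_le (b c : ℝ) {x : ℝ} (hx : 0 < x) :
    x⁻¹ * (exp (-(b * x)) - exp (-(c * x))) ≤ (c - b) * exp (-(b * x)) := by
  have hsplit : exp (-(c * x)) = exp (-(b * x)) * exp (-((c - b) * x)) := by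
    rw [← exp_add]; ring_nf
  rw [inv_mul_le_iff₀ hx, hsplit]
  nlinarith [one_sub_le_exp_neg ((c - b) * x), exp_pos (-(b * x))]

lemma inv_mul_exp_neg_sub_exp_neg_nonneg {b c x : ℝ} (hbc : b ≤ c) (hx : 0 < x) :
    0 ≤ x⁻¹ * (exp (-(b * x)) - exp (-(c * x))) := by
  have : exp (-(c * x)) ≤ exp (-(b * x)) := exp_le_exp.2 (by nlinarith)
  exact mul_nonneg (inv_nonneg.2 hx.le) (sub_nonneg.2 this)

lemma integrableOn_Ioi_inv_mul_exp_neg_sub_exp_neg {b c : ℝ} (hb : 0 < b) (hc : 0 < c) :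
    IntegrableOn (fun x ↦ x⁻¹ * (exp (-(b * x)) - exp (-(c * x)))) (Ioi 0) := by
  wlog hbc : b ≤ c generalizing b c
  · refine (this hc hb (le_of_not_ge hbc)).neg.congr_fun (fun x _ ↦ ?_) measurableSet_Ioi
    simp only [Pi.neg_apply]
    ring
  refine Integrable.mono' ((exp_neg_integrableOn_Ioi 0 hb).const_mul (c - b)) (by fun_prop) ?_
  filter_upwards [ae_restrict_mem measurableSet_Ioi] with x hx
  rw [norm_of_nonneg (inv_mul_exp_neg_sub_exp_neg_nonneg hbc hx), neg_mul]
  exact inv_mul_exp_neg_sub_exp_neg_le b c hx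

lemma integral_Ioi_inv_mul_exp_neg_sub_exp_neg {b c : ℝ} (hb : 0 < b) (hc : 0 < c) :
    ∫ x in Ioi 0, x⁻¹ * (exp (-(b * x)) - exp (-(c * x))) = log (c / b) := by
  have hcont : Continuous fun x ↦ exp (-x) := by fun_prop
  simpa using Frullani.integral_Ioi_eq (L := 1) (R := 0)
    (hcont.locallyIntegrable.locallyIntegrableOn _) hb hc
    ((hcont.tendsto' 0 1 (by simp)).mono_left nhdsWithin_le_nhds)
    tendsto_exp_neg_atTop_nhds_zero (integrableOn_Ioi_inv_mul_exp_neg_sub_exp_neg hb hc)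

lemma gaussian_scale_mixture_integrand_eq {a ν : ℝ} (ha : 0 < a) (hν : 0 < ν) (ω : ℝ) :
    sqrt (ν / (π * a)) * exp (-ν * ω ^ 2 / a) *
        ((1 - exp (-ν)) / (2 * sqrt π * ν ^ ((3 : ℝ) / 2)))
      = (2 * π * sqrt a)⁻¹ *
          (ν⁻¹ * (exp (-(ω ^ 2 / a * ν)) - exp (-((ω ^ 2 / a + 1) * ν)))) := by
  have hexp₁ : exp (-(ω ^ 2 / a * ν)) = exp (-ν * ω ^ 2 / a) := by ring_nf
  have hexp₂ : exp (-((ω ^ 2 / a + 1) * ν)) = exp (-ν * ω ^ 2 / a) * exp (-ν) := by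
    rw [← exp_add]; ring_nf
  have hν32 : ν ^ ((3 : ℝ) / 2) = ν * sqrt ν := by
    rw [show (3 : ℝ) / 2 = 1 + 1 / 2 by norm_num, rpow_add hν, rpow_one, sqrt_eq_rpow]
  have hsqrt : sqrt (ν / (π * a)) = sqrt ν / (sqrt π * sqrt a) := by
    rw [sqrt_div hν.le, sqrt_mul pi_pos.le]
  have hsν : 0 < sqrt ν := sqrt_pos.2 hν
  have hsπ : 0 < sqrt π := sqrt_pos.2 pi_pos
  have hsa : 0 < sqrt a := sqrt_pos.2 ha
  rw [hexp₁, hexp₂, hν32, hsqrt]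
  field_simp
  rw [sq_sqrt pi_pos.le]
  ring

theorem stmt_8 (a ω : ℝ) (ha : 0 < a) (hω : ω ≠ 0) :
    ∫ ν in Set.Ioi (0 : ℝ),
        Real.sqrt (ν / (Real.pi * a)) * Real.exp (-ν * ω ^ 2 / a) *
          ((1 - Real.exp (-ν)) / (2 * Real.sqrt Real.pi * ν ^ ((3 : ℝ) / 2)))
      = (1 / (2 * Real.pi * Real.sqrt a)) * Real.log (1 + a / ω ^ 2) := by
  have hb : 0 < ω ^ 2 / a := by positivity
  rw [setIntegral_congr_fun measurableSet_Ioi fun ν hν ↦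
      gaussian_scale_mixture_integrand_eq ha hν ω, integral_const_mul,
    integral_Ioi_inv_mul_exp_neg_sub_exp_neg hb (by positivity), one_div]
  congr 2
  field_simp
end

section
/- The slash-normal density π(t) = (φ(0) - φ(t))/t², where φ is the standard normal density, is a Gaussian scale mixture with Pareto(1/2) mixing: π(t) = (1/2)∫_1^∞ (2πr)^{-1/2} exp(-t²/(2r)) r^{-3/2} dr for all t ≠ 0. -/
open MeasureTheory

noncomputable def stdNormalPdf (t : ℝ) : ℝ := (2 * Real.pi) ^ (-(1 : ℝ) / 2) * Real.exp (-t ^ 2 / 2)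

/-!
After pulling out the constant `(2π)^{-1/2}`, the mixture integrand is `exp (-(t²/2) / r) / r²`,
which has the elementary antiderivative `exp (-(t²/2) / r) / (t²/2)`; evaluating it between
`r = 1` and `r = ∞` gives `(1 - exp (-t²/2)) / (t²/2)`.
-/

open Filter Real Set

lemma hasDerivAt_exp_neg_div (a : ℝ) {r : ℝ} (hr : r ≠ 0) :
    HasDerivAt (fun r => exp (-a / r)) (a * exp (-a / r) / r ^ 2) r := by
  have h := ((hasDerivAt_inv hr).const_mul (-a)).exp
  simp only [← div_eq_mul_inv] at h
  convert h using 1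
  ring

lemma tendsto_exp_neg_div_atTop (a : ℝ) :
    Tendsto (fun r : ℝ => exp (-a / r)) atTop (nhds 1) := by
  simpa [Function.comp_def] using
    (continuous_exp.tendsto 0).comp ((tendsto_const_nhds (x := -a)).div_atTop tendsto_id)

theorem integral_Ioi_one_exp_neg_div_div_sq {a : ℝ} (ha : a ≠ 0) :
    ∫ r in Ioi (1 : ℝ), exp (-a / r) / r ^ 2 = (1 - exp (-a)) / a := by
  have hderiv : ∀ r ∈ Ici (1 : ℝ),
      HasDerivAt (fun r => exp (-a / r) / a) (exp (-a / r) / r ^ 2) r := fun r hr => by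
    refine ((hasDerivAt_exp_neg_div a ?_).div_const a).congr_deriv (by field_simp)
    linarith [mem_Ici.mp hr]
  have hlim : Tendsto (fun r : ℝ => exp (-a / r) / a) atTop (nhds (1 / a)) :=
    (tendsto_exp_neg_div_atTop a).div_const a
  rw [integral_Ioi_of_hasDerivAt_of_nonneg' hderiv (fun r _ => by positivity) hlim]
  simp only [div_one]
  ring

lemma gaussian_pareto_integrand_eq {r : ℝ} (hr : 0 < r) (t : ℝ) :
    (2 * π * r) ^ (-(1 : ℝ) / 2) * exp (-t ^ 2 / (2 * r)) * r ^ (-(3 : ℝ) / 2)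
      = (2 * π) ^ (-(1 : ℝ) / 2) * (exp (-(t ^ 2 / 2) / r) / r ^ 2) := by
  have hpow : r ^ (-(1 : ℝ) / 2) * r ^ (-(3 : ℝ) / 2) = (r ^ 2)⁻¹ := by
    rw [← rpow_add hr, ← rpow_natCast, ← rpow_neg hr.le]
    norm_num
  have hexp : -t ^ 2 / (2 * r) = -(t ^ 2 / 2) / r := by ring
  rw [mul_rpow (by positivity) hr.le, div_eq_mul_inv _ (r ^ 2), ← hpow, hexp]
  ring

theorem stmt_9 (t : ℝ) (ht : t ≠ 0) :
    (stdNormalPdf 0 - stdNormalPdf t) / t ^ 2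
      = (1 / 2) * ∫ r in Set.Ioi (1 : ℝ),
          (2 * Real.pi * r) ^ (-(1 : ℝ) / 2) * Real.exp (-t ^ 2 / (2 * r)) * r ^ (-(3 : ℝ) / 2) := by
  have ha : t ^ 2 / 2 ≠ 0 := by positivity
  rw [setIntegral_congr_fun measurableSet_Ioi
      (fun r hr => gaussian_pareto_integrand_eq (zero_lt_one.trans hr) t),
    integral_const_mul, integral_Ioi_one_exp_neg_div_div_sq ha,
    stdNormalPdf, stdNormalPdf, neg_div]
  field_simp
  norm_num
end
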